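/- Assume ε ∈ {1,−1}, ξ ∉ {0, 1/6}, εξ(1−6ξ) > 0, z is twice differentiable at λ₁* with z′(λ₁*) ≠ 0, and z(λ₁*)² = 1/(6εξ(1−6ξ)). Let J be the 3×3 Jacobian matrix of the vector field F at the point P₁ = (−6ξ·z(λ₁*), 0, λ₁*). Then the characteristic polynomial of J equals (X − 6ξ)²·(X − 12ξ); in particular J has eigenvalues 6ξ, 6ξ, 12ξ, so for ξ > 0 the point P₁ (the finite scale factor singularity) is an unstable node and for ξ < 0 a stable node. -/

import Mathlib

/-!
On the singular surface `D(λ) = 0` the field degenerates: `f₃` vanishes for all `x, y`, and `f₂`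
vanishes on `y = 0`, so the Jacobian at any point with `y = 0` of that surface is upper triangular.
At `P₁` the factor `x + 6ξz(λ)` of `f₁` also vanishes, so the first two diagonal entries both equal
`(3/2)B(P₁)`, while the third is `x·D′(λ)/z′(λ) = −12εξ(1−6ξ)·x·z(λ)` because `D(λ) = 0` kills the
other term of the quotient rule. The relation `6εξ(1−6ξ)z(λ)² = 1` turns these into `6ξ, 6ξ, 12ξ`.
-/

open Polynomial Filter

/-- The factor `D(λ) = 1 − 6εξ(1−6ξ)z(λ)²` coming from the time reparametrization. -/
noncomputable def Dfun (ε ξ : ℝ) (z : ℝ → ℝ) (l : ℝ) : ℝ :=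
  1 - 6*ε*ξ*(1-6*ξ)*(z l)^2

/-- The common bracket
`B(x,y,λ) = −4/3 − 2ξλy²z(λ) + ε(1−6ξ)(1−w_m)x² + 2εξ(1−3w_m)(x+z(λ))² + (1+w_m)(1−y²)`. -/
noncomputable def Bfun (ε ξ wm : ℝ) (z : ℝ → ℝ) (x y l : ℝ) : ℝ :=
  -4/3 - 2*ξ*l*y^2*(z l) + ε*(1-6*ξ)*(1-wm)*x^2
    + 2*ε*ξ*(1-3*wm)*(x + z l)^2 + (1+wm)*(1-y^2)

/-- First component of the vector field:
`f₁ = −(x − (ε/2)λy²)·D(λ) + (3/2)(x + 6ξz(λ))·B(x,y,λ)`. -/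
noncomputable def f1 (ε ξ wm : ℝ) (z : ℝ → ℝ) (x y l : ℝ) : ℝ :=
  -(x - ε/2*l*y^2) * Dfun ε ξ z l + 3/2*(x + 6*ξ*(z l)) * Bfun ε ξ wm z x y l

/-- Second component: `f₂ = y(2 − (1/2)λx)·D(λ) + (3/2)y·B(x,y,λ)`. -/
noncomputable def f2 (ε ξ wm : ℝ) (z : ℝ → ℝ) (x y l : ℝ) : ℝ :=
  y*(2 - 1/2*l*x) * Dfun ε ξ z l + 3/2*y * Bfun ε ξ wm z x y l

/-- Third component: `f₃ = x·D(λ)/z′(λ)`. -/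
noncomputable def f3 (ε ξ : ℝ) (z : ℝ → ℝ) (x y l : ℝ) : ℝ :=
  x * Dfun ε ξ z l / deriv z l

/-- The full vector field `F(x,y,λ) = (f₁,f₂,f₃)` of the reduced cosmological system. -/
noncomputable def Fvec (ε ξ wm : ℝ) (z : ℝ → ℝ) (x y l : ℝ) : ℝ × ℝ × ℝ :=
  (f1 ε ξ wm z x y l, f2 ε ξ wm z x y l, f3 ε ξ z x y l)

/-- The effective equation-of-state parameter `w_eff(x,y,λ)`. -/
noncomputable def weff (ε ξ wm : ℝ) (z : ℝ → ℝ) (x y l : ℝ) : ℝ :=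
  (Dfun ε ξ z l)⁻¹ *
    (-1 + ε*(1-6*ξ)*(1-wm)*x^2 + 2*ε*ξ*(1-3*wm)*(x + z l)^2
      + (1+wm)*(1-y^2) - 2*ε*ξ*(1-6*ξ)*(z l)^2 - 2*ξ*l*y^2*(z l))

/-- The Jacobian matrix `J_{ij} = ∂f_i/∂(j-th variable)` of `F` at the point `(x,y,λ)`. -/
noncomputable def Jmat (ε ξ wm : ℝ) (z : ℝ → ℝ) (x y l : ℝ) :
    Matrix (Fin 3) (Fin 3) ℝ :=
  Matrix.of
    ![![deriv (fun t => f1 ε ξ wm z t y l) x,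
        deriv (fun t => f1 ε ξ wm z x t l) y,
        deriv (fun t => f1 ε ξ wm z x y t) l],
      ![deriv (fun t => f2 ε ξ wm z t y l) x,
        deriv (fun t => f2 ε ξ wm z x t l) y,
        deriv (fun t => f2 ε ξ wm z x y t) l],
      ![deriv (fun t => f3 ε ξ z t y l) x,
        deriv (fun t => f3 ε ξ z x t l) y,
        deriv (fun t => f3 ε ξ z x y t) l]]

theorem deriv_sub_mul_self {𝕜 : Type*} [NontriviallyNormedField 𝕜] {h : 𝕜 → 𝕜} {a : 𝕜}
    (hh : DifferentiableAt 𝕜 h a) : deriv (fun t => (t - a) * h t) a = h a := by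
  rw [(((hasDerivAt_id' a).sub_const a).fun_mul hh.hasDerivAt).deriv]
  simp

theorem HasDerivAt.div_of_eq_zero {𝕜 : Type*} [NontriviallyNormedField 𝕜] {f g : 𝕜 → 𝕜}
    {f' a : 𝕜} (hf : HasDerivAt f f' a) (hfa : f a = 0) (hg : DifferentiableAt 𝕜 g a)
    (hga : g a ≠ 0) : HasDerivAt (fun t => f t / g t) (f' / g a) a := by
  refine (hf.div hg.hasDerivAt hga).congr_deriv ?_
  rw [hfa]
  field_simp
  ring

theorem mem_roots_X_sub_C_sq_mul_X_sub_C {R : Type*} [CommRing R] [IsDomain R] {a b μ : R} :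
    μ ∈ ((X - C a) ^ 2 * (X - C b)).roots ↔ μ = a ∨ μ = b := by
  rw [roots_mul (by simp [X_sub_C_ne_zero]), roots_pow]
  simp

section VectorField

variable {ε ξ wm : ℝ} {z : ℝ → ℝ} {x y l : ℝ}

theorem Dfun_eq_zero_iff : Dfun ε ξ z l = 0 ↔ 6 * ε * ξ * (1 - 6 * ξ) * z l ^ 2 = 1 := by
  rw [Dfun, sub_eq_zero, eq_comm]

theorem hasDerivAt_Dfun {z' : ℝ} (hz : HasDerivAt z z' l) :
    HasDerivAt (Dfun ε ξ z) (-(12 * ε * ξ * (1 - 6 * ξ) * z l * z')) l := by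
  refine (((hz.fun_pow 2).const_mul (6 * ε * ξ * (1 - 6 * ξ))).const_sub 1).congr_deriv ?_
  push_cast
  ring

theorem f2_at_y_zero : f2 ε ξ wm z x 0 l = 0 := by
  simp [f2]

theorem f3_of_Dfun_eq_zero (hD : Dfun ε ξ z l = 0) : f3 ε ξ z x y l = 0 := by
  simp [f3, hD]

theorem Jmat_isUpperTriangular (hD : Dfun ε ξ z l = 0) :
    (Jmat ε ξ wm z x 0 l).IsUpperTriangular := by
  intro i j hij
  fin_cases i <;> fin_cases j <;> first
    | exact absurd hij (by decide)
    | simp [Jmat, f2_at_y_zero, f3_of_Dfun_eq_zero hD]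

theorem deriv_f1_x (hD : Dfun ε ξ z l = 0) :
    deriv (fun t => f1 ε ξ wm z t y l) (-(6 * ξ * z l)) =
      3 / 2 * Bfun ε ξ wm z (-(6 * ξ * z l)) y l := by
  have hf : (fun t => f1 ε ξ wm z t y l) =
      fun t => (t - -(6 * ξ * z l)) * (3 / 2 * Bfun ε ξ wm z t y l) := by
    funext t
    simp only [f1, hD]
    ring
  rw [hf, deriv_sub_mul_self (by unfold Bfun; fun_prop)]

theorem deriv_f2_y (hD : Dfun ε ξ z l = 0) :
    deriv (fun t => f2 ε ξ wm z x t l) 0 = 3 / 2 * Bfun ε ξ wm z x 0 l := by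
  have hf : (fun t => f2 ε ξ wm z x t l) =
      fun t => (t - 0) * (3 / 2 * Bfun ε ξ wm z x t l) := by
    funext t
    simp only [f2, hD]
    ring
  rw [hf, deriv_sub_mul_self (by unfold Bfun; fun_prop)]

theorem deriv_f3_l (hD : Dfun ε ξ z l = 0) (hz : DifferentiableAt ℝ z l)
    (hz2 : DifferentiableAt ℝ (deriv z) l) (hz' : deriv z l ≠ 0) :
    deriv (fun t => f3 ε ξ z x y t) l = -(12 * ε * ξ * (1 - 6 * ξ) * x * z l) := by
  have hf : (fun t => f3 ε ξ z x y t) = fun t => x * (Dfun ε ξ z t / deriv z t) := by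
    funext t
    simp only [f3, mul_div_assoc]
  rw [hf, (((hasDerivAt_Dfun hz.hasDerivAt).div_of_eq_zero hD hz2 hz').const_mul x).deriv]
  field_simp

theorem Bfun_at_singularity (hD : Dfun ε ξ z l = 0) :
    3 / 2 * Bfun ε ξ wm z (-(6 * ξ * z l)) 0 l = 6 * ξ := by
  rw [Dfun_eq_zero_iff] at hD
  simp only [Bfun]
  linear_combination (9 * ξ * (1 - wm) + (1 - 3 * wm) * (1 - 6 * ξ) / 2) * hD

theorem Jmat_diag_at_singularity (hD : Dfun ε ξ z l = 0) (hz : DifferentiableAt ℝ z l)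
    (hz2 : DifferentiableAt ℝ (deriv z) l) (hz' : deriv z l ≠ 0) :
    (Jmat ε ξ wm z (-(6 * ξ * z l)) 0 l).diag = ![6 * ξ, 6 * ξ, 12 * ξ] := by
  ext i
  fin_cases i
  · simp [Jmat, deriv_f1_x hD, Bfun_at_singularity hD]
  · simp [Jmat, deriv_f2_y hD, Bfun_at_singularity hD]
  · simp only [Fin.reduceFinMk, Matrix.diag_apply, Jmat, Matrix.of_apply, Matrix.cons_val,
      deriv_f3_l hD hz hz2 hz']
    rw [Dfun_eq_zero_iff] at hD
    linear_combination 12 * ξ * hD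

end VectorField

theorem singularity_point_charpoly_general (ε ξ wm : ℝ) (z : ℝ → ℝ) (lstar : ℝ)
    (hsign : 0 < ε*ξ*(1-6*ξ))
    (hz1 : ∀ᶠ t in nhds lstar, DifferentiableAt ℝ z t)
    (hz2 : DifferentiableAt ℝ (deriv z) lstar) (hz' : deriv z lstar ≠ 0)
    (hl : (z lstar)^2 = 1/(6*ε*ξ*(1-6*ξ))) :
    (Jmat ε ξ wm z (-(6*ξ*(z lstar))) 0 lstar).charpoly
      = (X - C (6*ξ))^2 * (X - C (12*ξ)) ∧
    (0 < ξ → ∀ μ ∈ (Jmat ε ξ wm z (-(6*ξ*(z lstar))) 0 lstar).charpoly.roots, 0 < μ) ∧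
    (ξ < 0 → ∀ μ ∈ (Jmat ε ξ wm z (-(6*ξ*(z lstar))) 0 lstar).charpoly.roots, μ < 0) := by
  have hD : Dfun ε ξ z lstar = 0 := by
    rw [Dfun_eq_zero_iff, hl, mul_one_div_cancel (ne_of_gt (by linarith))]
  have hcp : (Jmat ε ξ wm z (-(6*ξ*(z lstar))) 0 lstar).charpoly
      = (X - C (6*ξ))^2 * (X - C (12*ξ)) := by
    rw [Matrix.charpoly_of_isUpperTriangular _ (Jmat_isUpperTriangular hD), Fin.prod_univ_three]
    simp only [← Matrix.diag_apply, Jmat_diag_at_singularity hD hz1.self_of_nhds hz2 hz']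
    simp only [Matrix.cons_val]
    ring
  refine ⟨hcp, fun hξ μ hμ => ?_, fun hξ μ hμ => ?_⟩ <;>
    rw [hcp, mem_roots_X_sub_C_sq_mul_X_sub_C] at hμ <;> rcases hμ with rfl | rfl <;> linarith

/-- At the finite-scale-factor-singularity point
`P₁ = (−6ξz(λ₁*), 0, λ₁*)` with `z(λ₁*)² = 1/(6εξ(1−6ξ))`, the Jacobian has
characteristic polynomial `(X − 6ξ)²(X − 12ξ)`: eigenvalues `6ξ, 6ξ, 12ξ`, so for
`ξ > 0` the point is an unstable node (all eigenvalues positive) and for `ξ < 0` a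
stable node (all eigenvalues negative). -/
theorem singularity_point_charpoly (ε ξ wm : ℝ) (z : ℝ → ℝ) (lstar : ℝ)
    (hε : ε = 1 ∨ ε = -1) (hξ0 : ξ ≠ 0) (hξ6 : ξ ≠ 1/6)
    (hsign : 0 < ε*ξ*(1-6*ξ))
    (hz1 : ∀ᶠ t in nhds lstar, DifferentiableAt ℝ z t)
    (hz2 : DifferentiableAt ℝ (deriv z) lstar) (hz' : deriv z lstar ≠ 0)
    (hl : (z lstar)^2 = 1/(6*ε*ξ*(1-6*ξ))) :
    (Jmat ε ξ wm z (-(6*ξ*(z lstar))) 0 lstar).charpoly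
      = (X - C (6*ξ))^2 * (X - C (12*ξ)) ∧
    (0 < ξ → ∀ μ ∈ (Jmat ε ξ wm z (-(6*ξ*(z lstar))) 0 lstar).charpoly.roots, 0 < μ) ∧
    (ξ < 0 → ∀ μ ∈ (Jmat ε ξ wm z (-(6*ξ*(z lstar))) 0 lstar).charpoly.roots, μ < 0) :=
  singularity_point_charpoly_general ε ξ wm z lstar hsign hz1 hz2 hz' hl
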